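/- Let (V₁,V₂) be bivariate standard Gaussian with correlation ρ ∈ (-1,1). The probability P(V₁ ≤ p₁, V₂ ≤ p₂) is strictly increasing in the correlation parameter ρ, for any fixed p₁, p₂ ∈ ℝ. Consequently, the probabilities of the two regions {V₁ ≤ p₁, V₂ ≤ p₂} and {V₁ ≥ p₁, V₂ ≥ p₂} uniquely determine ρ given the marginal parameters. -/

import Mathlib

/-!
Realize `V₁ = W₁`, `V₂ = ρ W₁ + √(1 - ρ²) W₂`. Conditioning on `W₁ = x`, the lower orthant
probability is `P(ρ) = ∫_{x ≤ p₁} Φ((p₂ - ρ x) / √(1 - ρ²)) φ(x) dx`. The `ρ`-derivative of the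
integrand, `φ(x) φ((p₂ - ρ x) / √(1 - ρ²)) (ρ p₂ - x) / (1 - ρ²)^{3/2}`, is exactly the
`x`-derivative of the bivariate density `φ₂(x, p₂; ρ)`, which vanishes at `-∞`. Differentiating
under the integral sign therefore gives Plackett's identity `P'(ρ) = φ₂(p₁, p₂; ρ) > 0`, so `P` is
strictly increasing, hence injective, on `(-1, 1)`.
-/

open MeasureTheory ProbabilityTheory Set Filter Real
open scoped NNReal Topology

lemma hasDerivAt_gaussianPDFReal (μ : ℝ) (v : ℝ≥0) (x : ℝ) :
    HasDerivAt (gaussianPDFReal μ v) (-((x - μ) / v) * gaussianPDFReal μ v x) x := by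
  rcases eq_or_ne v 0 with rfl | hv
  · simp only [gaussianPDFReal_zero_var, Pi.zero_apply, mul_zero]
    exact hasDerivAt_const x 0
  have hexp : HasDerivAt (fun x => -(x - μ) ^ 2 / (2 * v)) (-((x - μ) / v)) x := by
    refine ((((hasDerivAt_id x).sub_const μ).pow 2).neg.div_const (2 * (v : ℝ))).congr_deriv ?_
    field_simp
    simp
  have := hexp.exp.const_mul (√(2 * π * v))⁻¹
  rw [← gaussianPDFReal_def] at this
  refine this.congr_deriv ?_
  rw [gaussianPDFReal]
  ring

lemma continuous_gaussianPDFReal (μ : ℝ) (v : ℝ≥0) : Continuous (gaussianPDFReal μ v) :=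
  continuous_iff_continuousAt.2 fun x => (hasDerivAt_gaussianPDFReal μ v x).continuousAt

lemma gaussianPDFReal_le_gaussianPDFReal_mean (μ : ℝ) (v : ℝ≥0) (x : ℝ) :
    gaussianPDFReal μ v x ≤ gaussianPDFReal μ v μ := by
  refine mul_le_mul_of_nonneg_left (exp_le_exp.2 ?_) (by positivity)
  rw [sub_self, zero_pow two_ne_zero, neg_zero, zero_div]
  exact div_nonpos_of_nonpos_of_nonneg (neg_nonpos.2 (sq_nonneg _)) (by positivity)

lemma tendsto_gaussianPDFReal_atBot (μ : ℝ) (v : ℝ≥0) :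
    Tendsto (gaussianPDFReal μ v) atBot (𝓝 0) := by
  rcases eq_or_ne v 0 with rfl | hv
  · rw [gaussianPDFReal_zero_var]
    exact tendsto_const_nhds
  have hsq : Tendsto (fun x : ℝ => (x - μ) ^ 2 / (2 * v)) atBot atTop :=
    (tendsto_pow_atTop two_ne_zero |>.comp <| tendsto_abs_atBot_atTop.comp <|
      tendsto_atBot_add_const_right _ (-μ) tendsto_id).atTop_div_const
      (show (0 : ℝ) < 2 * v by positivity) |>.congr fun x => by simp [sub_eq_add_neg]
  have := (tendsto_exp_atBot.comp (tendsto_neg_atTop_atBot.comp hsq)).const_mul (√(2 * π * v))⁻¹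
  rw [mul_zero] at this
  refine this.congr fun x => ?_
  simp only [Function.comp_apply, gaussianPDFReal, neg_div]

lemma integrable_gaussianReal_iff (μ : ℝ) {v : ℝ≥0} (hv : v ≠ 0) {f : ℝ → ℝ} :
    Integrable f (gaussianReal μ v) ↔ Integrable (fun x => gaussianPDFReal μ v x * f x) := by
  rw [gaussianReal_of_var_ne_zero μ hv, integrable_withDensity_iff_integrable_smul'
    (measurable_gaussianPDF μ v) (ae_of_all _ fun _ => gaussianPDF_lt_top)]
  simp only [toReal_gaussianPDF, smul_eq_mul]

lemma setIntegral_gaussianReal_eq_setIntegral_mul (μ : ℝ) {v : ℝ≥0} (hv : v ≠ 0) {s : Set ℝ}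
    (hs : MeasurableSet s) (f : ℝ → ℝ) :
    ∫ x in s, f x ∂gaussianReal μ v = ∫ x in s, gaussianPDFReal μ v x * f x := by
  rw [gaussianReal_of_var_ne_zero μ hv, restrict_withDensity hs,
    integral_withDensity_eq_integral_toReal_smul (measurable_gaussianPDF μ v)
      (ae_of_all _ fun _ => gaussianPDF_lt_top)]
  simp only [toReal_gaussianPDF, smul_eq_mul]

lemma integrable_mul_const_add_abs_gaussianReal (μ : ℝ) (v : ℝ≥0) (C b : ℝ) :
    Integrable (fun x => C * (b + |x|)) (gaussianReal μ v) :=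
  ((integrable_const b).add ((memLp_id_gaussianReal 1).integrable le_rfl).abs).const_mul C

lemma hasDerivAt_cdf_gaussianReal (μ : ℝ) {v : ℝ≥0} (hv : v ≠ 0) (x : ℝ) :
    HasDerivAt (cdf (gaussianReal μ v)) (gaussianPDFReal μ v x) x := by
  have hcdf : ∀ t, cdf (gaussianReal μ v) t = ∫ y in Iic t, gaussianPDFReal μ v y := fun t => by
    rw [cdf_eq_real, measureReal_def, gaussianReal_apply_eq_integral μ hv, ENNReal.toReal_ofReal
      (setIntegral_nonneg measurableSet_Iic fun y _ => gaussianPDFReal_nonneg μ v y)]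
  have hint := integrable_gaussianPDFReal μ v
  have hsplit : ∀ t, cdf (gaussianReal μ v) t
      = cdf (gaussianReal μ v) 0 + ∫ y in (0 : ℝ)..t, gaussianPDFReal μ v y := fun t => by
    rw [hcdf, hcdf, ← intervalIntegral.integral_Iic_sub_Iic hint.integrableOn hint.integrableOn]
    ring
  rw [funext hsplit]
  exact (intervalIntegral.integral_hasDerivAt_right hint.intervalIntegrable
    (continuous_gaussianPDFReal μ v).stronglyMeasurable.stronglyMeasurableAtFilter
    (continuous_gaussianPDFReal μ v).continuousAt).const_add _

lemma prod_setOf_fst_le_snd_le (μ ν : Measure ℝ) [SFinite ν] (a : ℝ) {g : ℝ → ℝ}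
    (hg : Measurable g) :
    μ.prod ν {w | w.1 ≤ a ∧ w.2 ≤ g w.1} = ∫⁻ x in Iic a, ν (Iic (g x)) ∂μ := by
  have hmeas : MeasurableSet {w : ℝ × ℝ | w.1 ≤ a ∧ w.2 ≤ g w.1} :=
    (measurableSet_le measurable_fst measurable_const).inter
      (measurableSet_le measurable_snd (hg.comp measurable_fst))
  rw [Measure.prod_apply hmeas, ← lintegral_indicator measurableSet_Iic]
  congr 1 with x
  by_cases hx : x ≤ a
  · simp [hx, Iic]
  · simp [hx]

lemma prod_real_setOf_fst_le_snd_le (μ ν : Measure ℝ) [IsFiniteMeasure μ]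
    [IsProbabilityMeasure ν] (a : ℝ) {g : ℝ → ℝ} (hg : Measurable g) :
    (μ.prod ν).real {w | w.1 ≤ a ∧ w.2 ≤ g w.1} = ∫ x in Iic a, cdf ν (g x) ∂μ := by
  have hint : Integrable (fun x => cdf ν (g x)) (μ.restrict (Iic a)) :=
    .of_bound ((monotone_cdf ν).measurable.comp hg).aestronglyMeasurable 1
      (ae_of_all _ fun x => by simp [abs_of_nonneg (cdf_nonneg ν _), cdf_le_one])
  simp_rw [measureReal_def, prod_setOf_fst_le_snd_le μ ν a hg, ← ofReal_cdf,
    ← ofReal_integral_eq_lintegral_ofReal hint (ae_of_all _ fun x => cdf_nonneg ν _)]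
  exact ENNReal.toReal_ofReal (integral_nonneg fun x => cdf_nonneg ν _)

local notation "φ" => gaussianPDFReal 0 1
local notation "γ" => gaussianReal 0 1

/-- The usual `exp (-(x² - 2ρxy + y²) / (2(1 - ρ²))) / (2π √(1 - ρ²))`, factored as the density
of `V₁` at `x` times the conditional density of `V₂` at `y` given `V₁ = x`. -/
noncomputable def stdBivariateGaussianPDF (ρ x y : ℝ) : ℝ :=
  φ x * φ ((y - ρ * x) / √(1 - ρ ^ 2)) / √(1 - ρ ^ 2)

lemma stdBivariateGaussianPDF_pos {ρ : ℝ} (hρ : |ρ| < 1) (x y : ℝ) :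
    0 < stdBivariateGaussianPDF ρ x y := by
  have hc : 0 < √(1 - ρ ^ 2) := sqrt_pos.2 (by nlinarith [sq_abs ρ, abs_nonneg ρ])
  unfold stdBivariateGaussianPDF
  have := gaussianPDFReal_pos 0 1 x one_ne_zero
  have := gaussianPDFReal_pos 0 1 ((y - ρ * x) / √(1 - ρ ^ 2)) one_ne_zero
  positivity

lemma tendsto_stdBivariateGaussianPDF_atBot (ρ y : ℝ) :
    Tendsto (fun x => stdBivariateGaussianPDF ρ x y) atBot (𝓝 0) := by
  have hlim := (tendsto_gaussianPDFReal_atBot 0 1).mul_const (φ 0 / √(1 - ρ ^ 2))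
  rw [zero_mul] at hlim
  refine tendsto_of_tendsto_of_tendsto_of_le_of_le tendsto_const_nhds hlim (fun x => ?_) fun x => ?_
  · unfold stdBivariateGaussianPDF
    have := gaussianPDFReal_nonneg 0 1 x
    have := gaussianPDFReal_nonneg 0 1 ((y - ρ * x) / √(1 - ρ ^ 2))
    positivity
  · rw [stdBivariateGaussianPDF, mul_div_assoc]
    gcongr
    · exact gaussianPDFReal_nonneg 0 1 x
    · exact gaussianPDFReal_le_gaussianPDFReal_mean 0 1 _

lemma hasDerivAt_div_sqrt_one_sub_sq {ρ : ℝ} (hρ : |ρ| < 1) (x y : ℝ) :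
    HasDerivAt (fun ρ => (y - ρ * x) / √(1 - ρ ^ 2)) ((ρ * y - x) / √(1 - ρ ^ 2) ^ 3) ρ := by
  have h : 0 < 1 - ρ ^ 2 := by nlinarith [sq_abs ρ, abs_nonneg ρ]
  have hsqrt : HasDerivAt (fun ρ => √(1 - ρ ^ 2)) (-(2 * ρ) / (2 * √(1 - ρ ^ 2))) ρ := by
    simpa using ((hasDerivAt_pow 2 ρ).const_sub 1).sqrt h.ne'
  have hc2 : √(1 - ρ ^ 2) ^ 2 = 1 - ρ ^ 2 := sq_sqrt h.le
  refine (((hasDerivAt_id ρ).mul_const x).const_sub y |>.div hsqrt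
    (sqrt_pos.2 h).ne').congr_deriv ?_
  simp only [id]
  field_simp
  linear_combination -x * hc2

lemma hasDerivAt_stdBivariateGaussianPDF_fst {ρ : ℝ} (hρ : |ρ| < 1) (x y : ℝ) :
    HasDerivAt (fun x => stdBivariateGaussianPDF ρ x y)
      (φ x * (φ ((y - ρ * x) / √(1 - ρ ^ 2)) * ((ρ * y - x) / √(1 - ρ ^ 2) ^ 3))) x := by
  have h : 0 < 1 - ρ ^ 2 := by nlinarith [sq_abs ρ, abs_nonneg ρ]
  set c := √(1 - ρ ^ 2)
  have hc2 : c ^ 2 = 1 - ρ ^ 2 := sq_sqrt h.le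
  have hc0 : c ≠ 0 := (sqrt_pos.2 h).ne'
  have hu : HasDerivAt (fun x => (y - ρ * x) / c) (-ρ / c) x := by
    simpa using ((hasDerivAt_id x).const_mul ρ |>.const_sub y).div_const c
  refine ((hasDerivAt_gaussianPDFReal 0 1 x).mul
    ((hasDerivAt_gaussianPDFReal 0 1 _).comp x hu) |>.div_const c).congr_deriv ?_
  simp only [Function.comp_apply, NNReal.coe_one, sub_zero, div_one]
  generalize φ x = A
  generalize φ ((y - ρ * x) / c) = B
  field_simp
  linear_combination -(A * B * x) * hc2

/-- `cdf γ ((y - ρ x) / √(1 - ρ²))` is the conditional probability of `V₂ ≤ y` given `V₁ = x`. -/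
lemma abs_deriv_cdf_threshold_le {ρ r : ℝ} (hρ : |ρ| ≤ r) (hr : r < 1) (x y : ℝ) :
    |φ ((y - ρ * x) / √(1 - ρ ^ 2)) * ((ρ * y - x) / √(1 - ρ ^ 2) ^ 3)|
      ≤ φ 0 / √(1 - r ^ 2) ^ 3 * (|y| + |x|) := by
  have hr0 : 0 < √(1 - r ^ 2) := sqrt_pos.2 (by nlinarith [abs_nonneg ρ])
  have hsqrt : √(1 - r ^ 2) ≤ √(1 - ρ ^ 2) :=
    sqrt_le_sqrt (by nlinarith [sq_abs ρ, abs_nonneg ρ])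
  have hnum : |ρ * y - x| ≤ |y| + |x| := by
    calc |ρ * y - x| ≤ |ρ| * |y| + |x| := by rw [← abs_mul]; exact abs_sub _ _
      _ ≤ |y| + |x| := by gcongr; nlinarith [abs_nonneg y]
  rw [abs_mul, abs_of_nonneg (gaussianPDFReal_nonneg 0 1 _), abs_div, abs_pow,
    abs_of_nonneg (sqrt_nonneg _), div_mul_eq_mul_div, mul_div_assoc]
  gcongr
  · exact gaussianPDFReal_nonneg 0 1 0
  · exact gaussianPDFReal_le_gaussianPDFReal_mean 0 1 _

lemma integral_Iic_deriv_cdf_eq_stdBivariateGaussianPDF {ρ : ℝ} (hρ : |ρ| < 1) (a y : ℝ) :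
    ∫ x in Iic a, φ ((y - ρ * x) / √(1 - ρ ^ 2)) * ((ρ * y - x) / √(1 - ρ ^ 2) ^ 3) ∂γ
      = stdBivariateGaussianPDF ρ a y := by
  have hint : Integrable
      (fun x => φ ((y - ρ * x) / √(1 - ρ ^ 2)) * ((ρ * y - x) / √(1 - ρ ^ 2) ^ 3)) γ :=
    (integrable_mul_const_add_abs_gaussianReal 0 1 _ |y|).mono'
      (((continuous_gaussianPDFReal 0 1).comp (by fun_prop)).mul (by fun_prop)).aestronglyMeasurable
      (ae_of_all _ fun x => abs_deriv_cdf_threshold_le le_rfl hρ x y)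
  rw [setIntegral_gaussianReal_eq_setIntegral_mul 0 one_ne_zero measurableSet_Iic,
    integral_Iic_of_hasDerivAt_of_tendsto'
      (fun x _ => hasDerivAt_stdBivariateGaussianPDF_fst hρ x y)
      ((integrable_gaussianReal_iff 0 one_ne_zero).1 hint).integrableOn
      (tendsto_stdBivariateGaussianPDF_atBot ρ y), sub_zero]

lemma hasDerivAt_integral_cdf_threshold (a y : ℝ) {ρ₀ : ℝ} (hρ₀ : |ρ₀| < 1) :
    HasDerivAt (fun ρ => ∫ x in Iic a, cdf γ ((y - ρ * x) / √(1 - ρ ^ 2)) ∂γ)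
      (stdBivariateGaussianPDF ρ₀ a y) ρ₀ := by
  obtain ⟨r, hρ₀r, hr⟩ := exists_between hρ₀
  have hnhds : Ioo (-r) r ∈ 𝓝 ρ₀ := Ioo_mem_nhds (by linarith [neg_abs_le ρ₀]) (lt_of_abs_lt hρ₀r)
  have hcdf_meas : ∀ ρ, AEStronglyMeasurable
      (fun x => cdf γ ((y - ρ * x) / √(1 - ρ ^ 2))) ((γ).restrict (Iic a)) := fun ρ =>
    ((monotone_cdf γ).measurable.comp (by fun_prop)).aestronglyMeasurable
  have hmain := hasDerivAt_integral_of_dominated_loc_of_deriv_le hnhds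
    (.of_forall hcdf_meas)
    (.of_bound (hcdf_meas ρ₀) 1 (ae_of_all _ fun x => by
      simp [abs_of_nonneg (cdf_nonneg γ _), cdf_le_one]))
    (((continuous_gaussianPDFReal 0 1).comp (by fun_prop)).mul (by fun_prop)).aestronglyMeasurable
    (ae_of_all _ fun x ρ hρ => abs_deriv_cdf_threshold_le
      (abs_le.2 ⟨hρ.1.le, hρ.2.le⟩) hr x y)
    (integrable_mul_const_add_abs_gaussianReal 0 1 _ |y|).restrict
    (ae_of_all _ fun x ρ hρ => (hasDerivAt_cdf_gaussianReal 0 one_ne_zero _).comp ρ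
      (hasDerivAt_div_sqrt_one_sub_sq (abs_lt.2 ⟨by linarith [hρ.1], by linarith [hρ.2]⟩) x y))
  rw [← integral_Iic_deriv_cdf_eq_stdBivariateGaussianPDF hρ₀]
  exact hmain.2

lemma strictMonoOn_integral_cdf_threshold (a y : ℝ) :
    StrictMonoOn (fun ρ => ∫ x in Iic a, cdf γ ((y - ρ * x) / √(1 - ρ ^ 2)) ∂γ) (Ioo (-1) 1) := by
  have hderiv : ∀ ρ ∈ Ioo (-1 : ℝ) 1, HasDerivAt
      (fun ρ => ∫ x in Iic a, cdf γ ((y - ρ * x) / √(1 - ρ ^ 2)) ∂γ)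
      (stdBivariateGaussianPDF ρ a y) ρ :=
    fun ρ hρ => hasDerivAt_integral_cdf_threshold a y (abs_lt.2 hρ)
  refine strictMonoOn_of_deriv_pos (convex_Ioo _ _)
    (fun ρ hρ => (hderiv ρ hρ).continuousAt.continuousWithinAt) fun ρ hρ => ?_
  rw [interior_Ioo] at hρ
  rw [(hderiv ρ hρ).deriv]
  exact stdBivariateGaussianPDF_pos (abs_lt.2 hρ) a y

/-- Slepian's inequality in the bivariate case: for a bivariate standard Gaussian
`(V₁, V₂)` with correlation `ρ` (realized as `V₁ = W₁`, `V₂ = ρ W₁ + √(1-ρ²) W₂` with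
`W₁, W₂` independent standard normals), `P(V₁ ≤ p₁, V₂ ≤ p₂)` is strictly increasing
in `ρ`; consequently the probabilities of the regions `{V₁ ≤ p₁, V₂ ≤ p₂}` and
`{V₁ ≥ p₁, V₂ ≥ p₂}` uniquely determine `ρ`. -/
theorem bivariate_gaussian_orthant_prob_strictMono (p₁ p₂ : ℝ) :
    StrictMonoOn (fun ρ : ℝ =>
      (((gaussianReal 0 1).prod (gaussianReal 0 1))
        {w : ℝ × ℝ | w.1 ≤ p₁ ∧ ρ * w.1 + Real.sqrt (1 - ρ^2) * w.2 ≤ p₂}).toReal)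
      (Set.Ioo (-1 : ℝ) 1) ∧
    ∀ ρ ∈ Set.Ioo (-1 : ℝ) 1, ∀ ρ' ∈ Set.Ioo (-1 : ℝ) 1,
      (((gaussianReal 0 1).prod (gaussianReal 0 1))
          {w : ℝ × ℝ | w.1 ≤ p₁ ∧ ρ * w.1 + Real.sqrt (1 - ρ^2) * w.2 ≤ p₂}
        = ((gaussianReal 0 1).prod (gaussianReal 0 1))
          {w : ℝ × ℝ | w.1 ≤ p₁ ∧ ρ' * w.1 + Real.sqrt (1 - ρ'^2) * w.2 ≤ p₂}) →
      (((gaussianReal 0 1).prod (gaussianReal 0 1))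
          {w : ℝ × ℝ | p₁ ≤ w.1 ∧ p₂ ≤ ρ * w.1 + Real.sqrt (1 - ρ^2) * w.2}
        = ((gaussianReal 0 1).prod (gaussianReal 0 1))
          {w : ℝ × ℝ | p₁ ≤ w.1 ∧ p₂ ≤ ρ' * w.1 + Real.sqrt (1 - ρ'^2) * w.2}) →
      ρ = ρ' := by
  have hprob : EqOn (fun ρ => ∫ x in Iic p₁, cdf γ ((p₂ - ρ * x) / √(1 - ρ ^ 2)) ∂γ)
      (fun ρ => ((γ).prod γ {w : ℝ × ℝ | w.1 ≤ p₁ ∧ ρ * w.1 + √(1 - ρ ^ 2) * w.2 ≤ p₂}).toReal)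
      (Ioo (-1) 1) := fun ρ hρ => by
    have hc : 0 < √(1 - ρ ^ 2) := sqrt_pos.2 (by nlinarith [hρ.1, hρ.2])
    have hslice : {w : ℝ × ℝ | w.1 ≤ p₁ ∧ ρ * w.1 + √(1 - ρ ^ 2) * w.2 ≤ p₂}
        = {w | w.1 ≤ p₁ ∧ w.2 ≤ (p₂ - ρ * w.1) / √(1 - ρ ^ 2)} :=
      Set.ext fun w => and_congr_right fun _ => by
        rw [le_div_iff₀ hc]
        constructor <;> intro h <;> linarith
    dsimp only
    rw [hslice, ← measureReal_def]
    exact (prod_real_setOf_fst_le_snd_le γ γ p₁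
      (g := fun x => (p₂ - ρ * x) / √(1 - ρ ^ 2)) (by fun_prop)).symm
  have hmono := (strictMonoOn_integral_cdf_threshold p₁ p₂).congr hprob
  exact ⟨hmono, fun ρ hρ ρ' hρ' hlower _ => hmono.injOn hρ hρ' (congrArg ENNReal.toReal hlower)⟩
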